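/- arXiv:1803.00335 — 2 statements merged into one kernel-verified Lean document; each statement's English description precedes it below -/
import Mathlib

section
/- (Fractional Black–Scholes pricing formula for the European call.) Let Z be a standard normal random variable, H ∈ (0,1), σ > 0, r ∈ ℝ, T > 0, K > 0, X_0 > 0. Then e^{−rT} E[(X_0 exp(σ T^H Z + rT − (1/2)σ² T^{2H}) − K)^+] = X_0 (1 − Φ(c_−)) − K e^{−rT}(1 − Φ(c_+)), where c_∓ = (1/(σ T^H)) log(K/X_0) − (r/σ) T^{1−H} ∓ (1/2)σ T^H, and Φ is the standard normal CDF. -/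
open MeasureTheory ProbabilityTheory Real
open scoped NNReal ENNReal

/-- The standard normal distribution function `Φ`. -/
noncomputable def stdNormalCDF (x : ℝ) : ℝ := ((gaussianReal 0 1) (Set.Iic x)).toReal

lemma integral_gaussianReal_eq (g : ℝ → ℝ) :
    ∫ z, g z ∂(gaussianReal 0 1) = ∫ z, gaussianPDFReal 0 1 z * g z := by
  rw [gaussianReal_of_var_ne_zero 0 one_ne_zero]
  have h : gaussianPDF 0 1 = fun x => ((Real.toNNReal (gaussianPDFReal 0 1 x) : ℝ≥0) : ℝ≥0∞) := rfl
  rw [h, integral_withDensity_eq_integral_smul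
    ((measurable_gaussianPDFReal 0 1).real_toNNReal) g]
  congr 1; ext z
  rw [NNReal.smul_def, smul_eq_mul, Real.coe_toNNReal _ (gaussianPDFReal_nonneg 0 1 z)]

lemma setIntegral_gaussianPDFReal (μ : ℝ) (s : Set ℝ) :
    ∫ x in s, gaussianPDFReal μ 1 x = ((gaussianReal μ 1) s).toReal := by
  rw [gaussianReal_apply_eq_integral μ one_ne_zero s, ENNReal.toReal_ofReal]
  exact integral_nonneg (fun x => gaussianPDFReal_nonneg μ 1 x)

lemma gaussianReal_Ici_toReal (a : ℝ) :
    ((gaussianReal 0 1) (Set.Ici a)).toReal = 1 - stdNormalCDF a := by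
  have hsing : (gaussianReal 0 1) {a} = 0 :=
    gaussianReal_absolutelyContinuous 0 one_ne_zero (measure_singleton a)
  have h1 : (gaussianReal 0 1) (Set.Ici a) = (gaussianReal 0 1) (Set.Ioi a) :=
    (measure_congr (Ioi_ae_eq_Ici' hsing)).symm
  have h2 : (gaussianReal 0 1) (Set.Ioi a) = 1 - (gaussianReal 0 1) (Set.Iic a) := by
    rw [← Set.compl_Iic, measure_compl measurableSet_Iic (measure_ne_top _ _), measure_univ]
  have hle : (gaussianReal 0 1) (Set.Iic a) ≤ 1 := prob_le_one
  rw [h1, h2, ENNReal.toReal_sub_of_le hle ENNReal.one_ne_top, ENNReal.toReal_one, stdNormalCDF]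

theorem fractional_BS_call_price
    (H σ r T K X₀ : ℝ) (hH : H ∈ Set.Ioo (0:ℝ) 1) (hσ : 0 < σ)
    (hT : 0 < T) (hK : 0 < K) (hX₀ : 0 < X₀) :
    Real.exp (-(r * T)) *
        ∫ z, max (X₀ * Real.exp (σ * T ^ H * z + r * T - σ^2 * T ^ (2*H) / 2) - K) 0
          ∂(gaussianReal 0 1)
      = X₀ * (1 - stdNormalCDF ((1 / (σ * T ^ H)) * Real.log (K / X₀)
            - (r / σ) * T ^ (1 - H) - σ * T ^ H / 2))
        - K * Real.exp (-(r * T)) *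
          (1 - stdNormalCDF ((1 / (σ * T ^ H)) * Real.log (K / X₀)
            - (r / σ) * T ^ (1 - H) + σ * T ^ H / 2)) := by
  have hTH : 0 < T ^ H := rpow_pos_of_pos hT H
  set s := σ * T ^ H with hs_def
  have hs : 0 < s := mul_pos hσ hTH
  have h2H : T ^ (2*H) = (T ^ H)^2 := by
    rw [show (2:ℝ)*H = H*2 by ring, Real.rpow_mul hT.le,
      show ((2:ℝ)) = ((2:ℕ):ℝ) by norm_num, Real.rpow_natCast]
  set m : ℝ := r*T - s^2/2 with hm_def
  set c : ℝ := (Real.log (K/X₀) - m)/s with hc_def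
  have hKX : 0 < K / X₀ := div_pos hK hX₀
  have hexp : ∀ z : ℝ, σ * T ^ H * z + r * T - σ^2 * T ^ (2*H) / 2 = s*z + m := by
    intro z; rw [h2H, hm_def, hs_def]; ring
  have hmax : ∀ z : ℝ, max (X₀ * rexp (s*z + m) - K) 0
      = Set.indicator (Set.Ici c) (fun z => X₀ * rexp (s*z+m) - K) z := by
    intro z
    by_cases hz : z ∈ Set.Ici c
    · rw [Set.indicator_of_mem hz, max_eq_left]
      have hzc : c ≤ z := hz
      have hlog : Real.log (K/X₀) ≤ s*z + m := by
        have h' := (div_le_iff₀ hs).mp hzc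
        nlinarith [h']
      have : K / X₀ ≤ rexp (s*z+m) := (Real.log_le_iff_le_exp hKX).mp hlog
      have : K ≤ X₀ * rexp (s*z+m) := by rw [div_le_iff₀ hX₀] at this; linarith
      linarith
    · rw [Set.indicator_of_notMem hz, max_eq_right]
      have hzc : z < c := lt_of_not_ge hz
      have hlog : s*z + m < Real.log (K/X₀) := by
        have h' := (lt_div_iff₀ hs).mp hzc
        nlinarith [h']
      have h1 : rexp (s*z+m) < K / X₀ := by
        have := Real.exp_lt_exp.mpr hlog
        rwa [Real.exp_log hKX] at this
      have : X₀ * rexp (s*z+m) < K := by rw [← lt_div_iff₀' hX₀]; rw [mul_comm] at *; nlinarith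
      linarith
  have hint : (∫ z, max (X₀ * rexp (σ*T^H*z + r*T - σ^2*T^(2*H)/2) - K) 0 ∂(gaussianReal 0 1))
      = X₀ * rexp (r*T) * ((gaussianReal 0 1) (Set.Ici (c - s))).toReal
        - K * ((gaussianReal 0 1) (Set.Ici c)).toReal := by
    rw [integral_gaussianReal_eq]
    have heq : ∀ z : ℝ, gaussianPDFReal 0 1 z
          * max (X₀ * rexp (σ*T^H*z + r*T - σ^2*T^(2*H)/2) - K) 0
        = Set.indicator (Set.Ici c)
            (fun z => (X₀ * rexp (r*T)) * gaussianPDFReal s 1 z - K * gaussianPDFReal 0 1 z) z := by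
      intro z
      rw [hexp z, hmax z]
      by_cases hz : z ∈ Set.Ici c
      · rw [Set.indicator_of_mem hz, Set.indicator_of_mem hz]
        have key : gaussianPDFReal 0 1 z * rexp (s*z+m) = rexp (r*T) * gaussianPDFReal s 1 z := by
          simp only [gaussianPDFReal, NNReal.coe_one, mul_one]
          rw [mul_assoc, ← Real.exp_add,
            show -(z-0)^2/2 + (s*z+m) = r*T + -(z-s)^2/2 by rw [hm_def]; ring,
            Real.exp_add]
          ring
        linear_combination X₀ * key
      · simp [Set.indicator_of_notMem hz]
    rw [show (fun z => gaussianPDFReal 0 1 z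
          * max (X₀ * rexp (σ*T^H*z + r*T - σ^2*T^(2*H)/2) - K) 0) = _ from funext heq,
      integral_indicator measurableSet_Ici,
      integral_sub (((integrable_gaussianPDFReal s 1).const_mul _).restrict)
        (((integrable_gaussianPDFReal 0 1).const_mul K).restrict),
      integral_const_mul, integral_const_mul, setIntegral_gaussianPDFReal,
      setIntegral_gaussianPDFReal]
    have hmap : gaussianReal s 1 = (gaussianReal 0 1).map (· + s) := by
      rw [gaussianReal_map_add_const]; norm_num
    rw [hmap, Measure.map_apply (measurable_add_const s) measurableSet_Ici,
      show (· + s) ⁻¹' Set.Ici c = Set.Ici (c - s) by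
        ext x; simp [Set.mem_Ici, le_sub_iff_add_le, sub_le_iff_le_add]]
  rw [hint, gaussianReal_Ici_toReal, gaussianReal_Ici_toReal]
  have hT1H : T ^ ((1:ℝ)-H) = T / T^H := by rw [Real.rpow_sub hT, Real.rpow_one]
  have hcplus : (1/(σ*T^H)) * Real.log (K/X₀) - (r/σ)*T^((1:ℝ)-H) + σ*T^H/2 = c := by
    rw [hT1H, hc_def, hm_def, hs_def]
    field_simp
    ring
  have hcminus : (1/(σ*T^H)) * Real.log (K/X₀) - (r/σ)*T^((1:ℝ)-H) - σ*T^H/2 = c - s := by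
    rw [hT1H, hc_def, hm_def, hs_def]
    field_simp
    ring
  rw [hcplus, hcminus]
  have hee : rexp (-(r*T)) * rexp (r*T) = 1 := by rw [← Real.exp_add]; simp
  set A := 1 - stdNormalCDF (c - s)
  set B := 1 - stdNormalCDF c
  linear_combination X₀ * A * hee
end

section
/- Let F : ℝ × [0,∞) → ℝ be C², H ∈ (0, 1/2], and let B^H_u be a centered Gaussian random variable with variance u^{2H} for each u (marginals of fBM). Assume F and its derivatives have polynomial growth. Then for 0 ≤ s ≤ t: E[F(B^H_t, t)] − E[F(B^H_s, s)] = ∫_s^t E[∂_u F(B^H_u, u)] du + (1/2) ∫_s^t E[∂_x² F(B^H_u, u)] d(u^{2H}), where d(u^{2H}) denotes integration against the increasing function u ↦ u^{2H} (i.e. the second integral is ∫_s^t E[∂_x²F(B^H_u,u)] · 2H u^{2H−1} du). -/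
open MeasureTheory ProbabilityTheory Real Set Filter Topology Function
open scoped NNReal

/-! Write `g u = E F(u ^ H Z, u)` with `Z` standard normal. Polynomial growth supplies
Gaussian-integrable dominating functions, uniformly for `u` in compact subsets of `(0, T)`, so
differentiation under the integral gives `g' u = E ∂ₜF + H u ^ (H - 1) E[Z ∂ₓF(u ^ H Z, u)]`.
Gaussian integration by parts, `E[Z h(Z)] = E[h'(Z)]`, turns the second term into
`H u ^ (2H - 1) E ∂ₓ²F = ½ E ∂ₓ²F · (u ^ (2H))'`. The fundamental theorem of calculus on `[s, t]`
then needs only continuity of `g` at `u = 0`, and `2H - 1 > -1` keeps `u ^ (2H - 1)` integrable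
there. The growth of `∂ₓF`, which is not assumed, follows from that of `∂ₓ²F` by the mean value
theorem. -/

section Gaussian

variable {μ : ℝ} {v : ℝ≥0}

lemma hasDerivAt_gaussianPDFReal (μ : ℝ) (v : ℝ≥0) (x : ℝ) :
    HasDerivAt (gaussianPDFReal μ v) (-((x - μ) / v) * gaussianPDFReal μ v x) x := by
  have hexp : HasDerivAt (fun y => -(y - μ) ^ 2 / (2 * v)) (-((x - μ) / v)) x :=
    ((((hasDerivAt_id' x).sub_const μ).fun_pow 2).fun_neg.div_const _).congr_deriv
      (by norm_num; ring)
  rw [gaussianPDFReal_def]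
  exact (hexp.exp.const_mul _).congr_deriv (by ring)

lemma integrable_gaussianReal_iff (hv : v ≠ 0) {g : ℝ → ℝ} :
    Integrable g (gaussianReal μ v) ↔ Integrable (fun x => gaussianPDFReal μ v x * g x) := by
  rw [gaussianReal_of_var_ne_zero _ hv, integrable_withDensity_iff_integrable_smul'
    (measurable_gaussianPDF _ _) (ae_of_all _ fun _ => gaussianPDF_lt_top)]
  simp [toReal_gaussianPDF]

theorem integral_sub_mul_eq_integral_deriv_gaussianReal (hv : v ≠ 0) {h h' : ℝ → ℝ}
    (hd : ∀ x, HasDerivAt h (h' x) x) (hh : Integrable h (gaussianReal μ v))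
    (hxh : Integrable (fun x => (x - μ) * h x) (gaussianReal μ v))
    (hh' : Integrable h' (gaussianReal μ v)) :
    ∫ x, (x - μ) * h x ∂gaussianReal μ v = v * ∫ x, h' x ∂gaussianReal μ v := by
  rw [integrable_gaussianReal_iff hv] at hh hxh hh'
  have hφ' : (h * fun x => -((x - μ) / v) * gaussianPDFReal μ v x) =
      fun x => -(v : ℝ)⁻¹ * (gaussianPDFReal μ v x * ((x - μ) * h x)) := by
    ext x; simp only [Pi.mul_apply]; ring
  have hparts := integral_mul_deriv_eq_deriv_mul_of_integrable
    (fun x _ => hd x) (fun x _ => hasDerivAt_gaussianPDFReal μ v x)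
    (hφ' ▸ hxh.const_mul (-(v : ℝ)⁻¹))
    (by simpa only [Pi.mul_def, mul_comm] using hh')
    (by simpa only [Pi.mul_def, mul_comm] using hh)
  rw [show (fun x => h x * (-((x - μ) / v) * gaussianPDFReal μ v x)) = _ from hφ',
    integral_const_mul] at hparts
  simp only [integral_gaussianReal_eq_integral_smul hv, smul_eq_mul]
  rw [integral_congr_ae (ae_of_all _ fun x => mul_comm (gaussianPDFReal μ v x) (h' x)),
    ← mul_inv_cancel_left₀ (by exact_mod_cast hv : (v : ℝ) ≠ 0)
      (∫ x, gaussianPDFReal μ v x * ((x - μ) * h x))]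
  linear_combination (v : ℝ) * -hparts

lemma integrable_one_add_abs_pow_gaussianReal (n : ℕ) :
    Integrable (fun x => (1 + |x|) ^ n) (gaussianReal μ v) := by
  have hid : MemLp (fun x : ℝ => ‖x‖) n (gaussianReal μ v) :=
    (memLp_id_gaussianReal' (n : ENNReal) (ENNReal.natCast_ne_top n)).norm
  refine ((memLp_const (1:ℝ)).add hid).integrable_norm_pow'.congr (ae_of_all _ fun x => ?_)
  simp [abs_of_nonneg (by positivity : (0:ℝ) ≤ 1 + |x|)]

end Gaussian

def PolyGrowthOn (G : ℝ → ℝ → ℝ) (s : Set ℝ) : Prop :=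
  ∃ C : ℝ, ∃ n : ℕ, ∀ x t, t ∈ s → |G x t| ≤ C * (1 + |x|) ^ n

lemma one_add_abs_mul_le {a b K : ℝ} (ha : |a| ≤ K) : 1 + |a * b| ≤ (1 + K) * (1 + |b|) := by
  rw [abs_mul]
  nlinarith [abs_nonneg a, abs_nonneg b]

lemma polyGrowthOn_id {s : Set ℝ} : PolyGrowthOn (fun x _ => x) s :=
  ⟨1, 1, fun x _ _ => by simp⟩

lemma polyGrowthOn_of_norm_le {c : ℝ → ℝ} {s : Set ℝ} (hc : ∃ K, ∀ t ∈ s, ‖c t‖ ≤ K) :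
    PolyGrowthOn (fun _ t => c t) s :=
  let ⟨K, hK⟩ := hc
  ⟨K, 0, fun _ t ht => by simpa using hK t ht⟩

namespace PolyGrowthOn

variable {G G' : ℝ → ℝ → ℝ} {s : Set ℝ}

lemma exists_nonneg (hG : PolyGrowthOn G s) :
    ∃ C, 0 ≤ C ∧ ∃ n : ℕ, ∀ x t, t ∈ s → |G x t| ≤ C * (1 + |x|) ^ n := by
  obtain ⟨C, n, h⟩ := hG
  refine ⟨max C 0, le_max_right _ _, n, fun x t ht => (h x t ht).trans ?_⟩
  gcongr
  exact le_max_left _ _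

lemma mono {s' : Set ℝ} (hG : PolyGrowthOn G s) (hs : s' ⊆ s) : PolyGrowthOn G s' :=
  let ⟨C, n, h⟩ := hG
  ⟨C, n, fun x t ht => h x t (hs ht)⟩

lemma add (hG : PolyGrowthOn G s) (hG' : PolyGrowthOn G' s) :
    PolyGrowthOn (fun x t => G x t + G' x t) s := by
  obtain ⟨C, hC, m, h⟩ := hG.exists_nonneg
  obtain ⟨C', hC', m', h'⟩ := hG'.exists_nonneg
  refine ⟨C + C', m + m', fun x t ht => ?_⟩
  have h1 : (1 : ℝ) ≤ 1 + |x| := by simp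
  calc |G x t + G' x t| ≤ C * (1 + |x|) ^ m + C' * (1 + |x|) ^ m' :=
        (abs_add_le _ _).trans (add_le_add (h x t ht) (h' x t ht))
    _ ≤ C * (1 + |x|) ^ (m + m') + C' * (1 + |x|) ^ (m + m') := by
        gcongr <;> first | exact h1 | omega
    _ = (C + C') * (1 + |x|) ^ (m + m') := by ring

lemma mul (hG : PolyGrowthOn G s) (hG' : PolyGrowthOn G' s) :
    PolyGrowthOn (fun x t => G x t * G' x t) s := by
  obtain ⟨C, hC, m, h⟩ := hG.exists_nonneg
  obtain ⟨C', -, m', h'⟩ := hG'.exists_nonneg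
  refine ⟨C * C', m + m', fun x t ht => ?_⟩
  rw [abs_mul, pow_add, mul_mul_mul_comm]
  exact mul_le_mul (h x t ht) (h' x t ht) (abs_nonneg _) (by positivity)

lemma comp_mul_left {c : ℝ → ℝ} (hG : PolyGrowthOn G s) (hc : ∃ K, ∀ t ∈ s, ‖c t‖ ≤ K) :
    PolyGrowthOn (fun x t => G (c t * x) t) s := by
  obtain ⟨C, hC, n, h⟩ := hG.exists_nonneg
  obtain ⟨K, hK⟩ := hc
  refine ⟨C * (1 + K) ^ n, n, fun x t ht => (h _ t ht).trans ?_⟩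
  have hKt := hK t ht
  rw [mul_assoc, ← mul_pow]
  gcongr
  exact one_add_abs_mul_le hKt

variable {μ : ℝ} {v : ℝ≥0}

lemma integrable {t : ℝ} (hG : PolyGrowthOn G s) (ht : t ∈ s)
    (hm : AEStronglyMeasurable (G · t) (gaussianReal μ v)) :
    Integrable (G · t) (gaussianReal μ v) :=
  let ⟨C, n, h⟩ := hG
  ((integrable_one_add_abs_pow_gaussianReal n).const_mul C).mono' hm
    (ae_of_all _ fun x => h x t ht)

lemma continuousOn_integral (hG : PolyGrowthOn G s) (hc : Continuous (uncurry G)) :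
    ContinuousOn (fun t => ∫ x, G x t ∂gaussianReal μ v) s := by
  obtain ⟨C, n, h⟩ := hG
  exact continuousOn_of_dominated
    (fun t _ => (hc.comp₂ continuous_id continuous_const).aestronglyMeasurable)
    (fun t ht => ae_of_all _ fun x => h x t ht)
    ((integrable_one_add_abs_pow_gaussianReal n).const_mul C)
    (ae_of_all _ fun x => (hc.comp₂ continuous_const continuous_id).continuousOn)

lemma hasDerivAt_integral {t₀ : ℝ} (hs : s ∈ 𝓝 t₀) (hG : PolyGrowthOn G s)
    (hG' : PolyGrowthOn G' s) (hc : ∀ t ∈ s, Continuous (G · t)) (hc' : Continuous (G' · t₀))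
    (hd : ∀ x, ∀ t ∈ s, HasDerivAt (G x) (G' x t) t) :
    HasDerivAt (fun t => ∫ x, G x t ∂gaussianReal μ v) (∫ x, G' x t₀ ∂gaussianReal μ v) t₀ := by
  obtain ⟨C, n, h⟩ := hG'
  exact (hasDerivAt_integral_of_dominated_loc_of_deriv_le hs
    (eventually_of_mem hs fun t ht => (hc t ht).aestronglyMeasurable)
    (hG.integrable (mem_of_mem_nhds hs) (hc _ (mem_of_mem_nhds hs)).aestronglyMeasurable)
    hc'.aestronglyMeasurable (ae_of_all _ fun x t ht => h x t ht)
    ((integrable_one_add_abs_pow_gaussianReal n).const_mul C)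
    (ae_of_all _ fun x t ht => hd x t ht)).2

lemma of_hasDerivAt (hG' : PolyGrowthOn G' s) (hd : ∀ x, ∀ t ∈ s, HasDerivAt (G · t) (G' x t) x)
    (h₀ : ∃ M, ∀ t ∈ s, ‖G 0 t‖ ≤ M) : PolyGrowthOn G s := by
  obtain ⟨C, hC, n, h⟩ := hG'.exists_nonneg
  obtain ⟨M, hM⟩ := h₀
  refine ⟨M + C, n + 1, fun x t ht => ?_⟩
  have hmvt : ‖G x t - G 0 t‖ ≤ C * (1 + |x|) ^ n * ‖x - 0‖ := by
    refine (convex_Icc (-|x|) |x|).norm_image_sub_le_of_norm_hasDerivWithin_le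
      (fun y _ => (hd y t ht).hasDerivWithinAt) (fun y hy => ?_)
      (by simp) (by simp [neg_abs_le, le_abs_self])
    refine (h y t ht).trans ?_
    have hy' : |y| ≤ |x| := abs_le.2 hy
    gcongr
  have hP : 1 ≤ (1 + |x|) ^ n := one_le_pow₀ (by simp)
  have hM0 : 0 ≤ M := (norm_nonneg _).trans (hM t ht)
  rw [Real.norm_eq_abs, Real.norm_eq_abs, sub_zero] at hmvt
  calc |G x t| ≤ |G 0 t| + C * (1 + |x|) ^ n * |x| := by
        linarith [abs_sub_abs_le_abs_sub (G x t) (G 0 t)]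
    _ ≤ M + C * (1 + |x|) ^ n * |x| := by gcongr; exact hM t ht
    _ ≤ (M + C) * (1 + |x|) ^ (n + 1) := by
        have hPx : 1 ≤ (1 + |x|) ^ n * (1 + |x|) := one_le_mul_of_one_le_of_one_le hP (by simp)
        rw [pow_succ]
        nlinarith [mul_le_mul_of_nonneg_left hPx hM0, mul_nonneg hC (zero_le_one.trans hP)]

end PolyGrowthOn

section Partials

variable {F : ℝ → ℝ → ℝ} {x t : ℝ}

lemma hasDerivAt_left_of_differentiableAt (hF : DifferentiableAt ℝ (uncurry F) (x, t)) :
    HasDerivAt (F · t) (fderiv ℝ (uncurry F) (x, t) (1, 0)) x :=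
  HasFDerivAt.comp_hasDerivAt (f := fun z => (z, t)) x hF.hasFDerivAt
    ((hasDerivAt_id x).prodMk (hasDerivAt_const x t))

lemma hasDerivAt_right_of_differentiableAt (hF : DifferentiableAt ℝ (uncurry F) (x, t)) :
    HasDerivAt (F x) (fderiv ℝ (uncurry F) (x, t) (0, 1)) t :=
  HasFDerivAt.comp_hasDerivAt (f := fun z => (x, z)) t hF.hasFDerivAt
    ((hasDerivAt_const t x).prodMk (hasDerivAt_id t))

lemma contDiff_deriv_left {m n : WithTop ℕ∞} (hF : ContDiff ℝ n (uncurry F)) (hmn : m + 1 ≤ n) :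
    ContDiff ℝ m (uncurry fun x t => deriv (F · t) x) := by
  convert (hF.fderiv_right hmn).clm_apply (contDiff_const (c := ((1, 0) : ℝ × ℝ))) using 1
  ext p
  exact (hasDerivAt_left_of_differentiableAt
    (hF.differentiable (one_pos.trans_le (le_add_self.trans hmn)).ne' p)).deriv

lemma contDiff_deriv_right {m n : WithTop ℕ∞} (hF : ContDiff ℝ n (uncurry F)) (hmn : m + 1 ≤ n) :
    ContDiff ℝ m (uncurry fun x t => deriv (F x) t) := by
  convert (hF.fderiv_right hmn).clm_apply (contDiff_const (c := ((0, 1) : ℝ × ℝ))) using 1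
  ext p
  exact (hasDerivAt_right_of_differentiableAt
    (hF.differentiable (one_pos.trans_le (le_add_self.trans hmn)).ne' p)).deriv

lemma hasDerivAt_apply_curve {c : ℝ → ℝ} {c' u : ℝ}
    (hF : DifferentiableAt ℝ (uncurry F) (c u, u)) (hc : HasDerivAt c c' u) :
    HasDerivAt (fun v => F (c v) v) (deriv (F · u) (c u) * c' + deriv (F (c u)) u) u := by
  refine (HasFDerivAt.comp_hasDerivAt (f := fun v => (c v, v)) u hF.hasFDerivAt
    (hc.prodMk (hasDerivAt_id u))).congr_deriv ?_
  have hsplit : ((c', 1) : ℝ × ℝ) = c' • (1, 0) + (0, 1) := by simp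
  rw [(hasDerivAt_left_of_differentiableAt hF).deriv,
    (hasDerivAt_right_of_differentiableAt hF).deriv, hsplit, map_add, map_smul, smul_eq_mul,
    mul_comm]

lemma continuous_deriv_left (hF : ContDiff ℝ 1 (uncurry F)) :
    Continuous (uncurry fun x t => deriv (F · t) x) :=
  (contDiff_deriv_left hF (m := 0) (by norm_num)).continuous

lemma continuous_deriv_right (hF : ContDiff ℝ 1 (uncurry F)) :
    Continuous (uncurry fun x t => deriv (F x) t) :=
  (contDiff_deriv_right hF (m := 0) (by norm_num)).continuous

lemma continuous_deriv_deriv_left (hF : ContDiff ℝ 2 (uncurry F)) :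
    Continuous (uncurry fun x t => deriv (deriv (F · t)) x) :=
  continuous_deriv_left (contDiff_deriv_left hF (by norm_num))

lemma hasDerivAt_deriv_left (hF : ContDiff ℝ 2 (uncurry F)) (x t : ℝ) :
    HasDerivAt (deriv (F · t)) (deriv (deriv (F · t)) x) x :=
  (hasDerivAt_left_of_differentiableAt ((contDiff_deriv_left hF (m := 1)
    (by norm_num)).differentiable one_ne_zero (x, t))).differentiableAt.hasDerivAt

end Partials

section GaussianMarginal

variable {H T : ℝ} {G F : ℝ → ℝ → ℝ}

lemma PolyGrowthOn.comp_rpow_mul (hG : PolyGrowthOn G (Icc 0 T)) (hH : 0 ≤ H) :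
    PolyGrowthOn (fun x u => G (u ^ H * x) u) (Icc 0 T) :=
  hG.comp_mul_left (isCompact_Icc.exists_bound_of_continuousOn
    (continuous_rpow_const hH).continuousOn)

lemma continuousOn_integral_comp_rpow_mul {μ : ℝ} {v : ℝ≥0} (hG : PolyGrowthOn G (Icc 0 T))
    (hc : Continuous (uncurry G)) (hH : 0 ≤ H) :
    ContinuousOn (fun u => ∫ x, G (u ^ H * x) u ∂gaussianReal μ v) (Icc 0 T) :=
  (hG.comp_rpow_mul hH).continuousOn_integral (hc.comp₂
    (((continuous_rpow_const hH).comp continuous_snd).mul continuous_fst) continuous_snd)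

lemma polyGrowthOn_deriv_left (hF : ContDiff ℝ 2 (uncurry F)) {s : Set ℝ} (hs : IsCompact s)
    (hFxx : PolyGrowthOn (fun x t => deriv (deriv (F · t)) x) s) :
    PolyGrowthOn (fun x t => deriv (F · t) x) s :=
  hFxx.of_hasDerivAt (fun x t _ => hasDerivAt_deriv_left hF x t)
    (hs.exists_bound_of_continuousOn ((continuous_deriv_left (hF.of_le one_le_two)).comp₂
      continuous_const continuous_id).continuousOn)

lemma integral_mul_deriv_left_comp_mul (hF : ContDiff ℝ 2 (uncurry F)) {s : Set ℝ}
    (hFx : PolyGrowthOn (fun x t => deriv (F · t) x) s)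
    (hFxx : PolyGrowthOn (fun x t => deriv (deriv (F · t)) x) s) (c : ℝ) {t : ℝ} (ht : t ∈ s) :
    ∫ x, x * deriv (F · t) (c * x) ∂gaussianReal 0 1 =
      c * ∫ x, deriv (deriv (F · t)) (c * x) ∂gaussianReal 0 1 := by
  have hc : ∃ K, ∀ t ∈ s, ‖c‖ ≤ K := ⟨‖c‖, fun _ _ => le_rfl⟩
  have hcont : ∀ {G : ℝ → ℝ → ℝ}, Continuous (uncurry G) → Continuous fun x => G (c * x) t :=
    fun hG => hG.comp₂ (continuous_const_mul c) continuous_const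
  have hFxc := hcont (continuous_deriv_left (hF.of_le one_le_two))
  have hFxxc := hcont (continuous_deriv_deriv_left hF)
  have hxh : Integrable (fun x => (x - 0) * deriv (F · t) (c * x)) (gaussianReal 0 1) := by
    simpa using (polyGrowthOn_id.mul (hFx.comp_mul_left hc)).integrable ht
      (continuous_id.mul hFxc).aestronglyMeasurable
  have hstein := integral_sub_mul_eq_integral_deriv_gaussianReal one_ne_zero
    (h' := fun x => c * deriv (deriv (F · t)) (c * x))
    (fun x => ((hasDerivAt_deriv_left hF (c * x) t).comp x
      ((hasDerivAt_id x).const_mul c)).congr_deriv (by simp [mul_comm]))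
    ((hFx.comp_mul_left hc).integrable ht hFxc.aestronglyMeasurable) hxh
    (((hFxx.comp_mul_left hc).integrable ht hFxxc.aestronglyMeasurable).const_mul c)
  simpa [integral_const_mul] using hstein

theorem hasDerivAt_integral_comp_rpow_mul_chain (hH : 0 < H) (hF : ContDiff ℝ 1 (uncurry F))
    (hF₀ : PolyGrowthOn F (Icc 0 T)) (hFx : PolyGrowthOn (fun x t => deriv (F · t) x) (Icc 0 T))
    (hFt : PolyGrowthOn (fun x t => deriv (F x) t) (Icc 0 T)) {u : ℝ} (hu : u ∈ Ioo 0 T) :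
    HasDerivAt (fun w => ∫ x, F (w ^ H * x) w ∂gaussianReal 0 1)
      ((∫ x, deriv (F (u ^ H * x)) u ∂gaussianReal 0 1) +
        ∫ x, deriv (F · u) (u ^ H * x) * (H * u ^ (H - 1) * x) ∂gaussianReal 0 1) u := by
  have hs : Ioo (u / 2) T ∈ 𝓝 u := Ioo_mem_nhds (by linarith [hu.1]) hu.2
  have hsub : Ioo (u / 2) T ⊆ Icc 0 T := fun w hw => ⟨by linarith [hu.1, hw.1], hw.2.le⟩
  -- the speed `H * w ^ (H - 1)` of `w ↦ w ^ H * x` blows up at `0`, so stay away from it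
  have hspeed : ∃ K, ∀ w ∈ Ioo (u / 2) T, ‖H * w ^ (H - 1)‖ ≤ K := by
    obtain ⟨K, hK⟩ := isCompact_Icc.exists_bound_of_continuousOn (s := Icc (u / 2) T)
      (f := fun w => H * w ^ (H - 1)) fun w hw => (continuousAt_const.mul
        (continuousAt_rpow_const _ _ (Or.inl (by linarith [hu.1, hw.1])))).continuousWithinAt
    exact ⟨K, fun w hw => hK w (Ioo_subset_Icc_self hw)⟩
  have hG₁ : PolyGrowthOn (fun x w => deriv (F · w) (w ^ H * x) * (H * w ^ (H - 1) * x))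
      (Ioo (u / 2) T) :=
    ((hFx.comp_rpow_mul hH.le).mono hsub).mul
      ((polyGrowthOn_of_norm_le hspeed).mul polyGrowthOn_id)
  have hG₂ : PolyGrowthOn (fun x w => deriv (F (w ^ H * x)) w) (Ioo (u / 2) T) :=
    (hFt.comp_rpow_mul hH.le).mono hsub
  have hc₁ : Continuous fun x => deriv (F · u) (u ^ H * x) * (H * u ^ (H - 1) * x) :=
    ((continuous_deriv_left hF).comp₂ (continuous_const_mul _) continuous_const).mul
      (continuous_const_mul _)
  have hc₂ : Continuous fun x => deriv (F (u ^ H * x)) u :=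
    (continuous_deriv_right hF).comp₂ (continuous_const_mul _) continuous_const
  have hu' : u ∈ Ioo (u / 2) T := ⟨by linarith [hu.1], hu.2⟩
  have hchain := PolyGrowthOn.hasDerivAt_integral (μ := 0) (v := 1) hs
    ((hF₀.comp_rpow_mul hH.le).mono hsub) (hG₁.add hG₂)
    (fun w _ => hF.continuous.comp₂ (continuous_const_mul _) continuous_const) (hc₁.add hc₂)
    (fun x w hw => hasDerivAt_apply_curve (hF.differentiable one_ne_zero _)
      ((hasDerivAt_rpow_const (Or.inl (by linarith [hu.1, hw.1]))).mul_const x))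
  rwa [integral_add (hG₁.integrable hu' hc₁.aestronglyMeasurable)
    (hG₂.integrable hu' hc₂.aestronglyMeasurable), add_comm] at hchain

theorem hasDerivAt_integral_comp_rpow_mul (hH : 0 < H) (hF : ContDiff ℝ 2 (uncurry F))
    (hF₀ : PolyGrowthOn F (Icc 0 T)) (hFt : PolyGrowthOn (fun x t => deriv (F x) t) (Icc 0 T))
    (hFxx : PolyGrowthOn (fun x t => deriv (deriv (F · t)) x) (Icc 0 T)) {u : ℝ}
    (hu : u ∈ Ioo 0 T) :
    HasDerivAt (fun w => ∫ x, F (w ^ H * x) w ∂gaussianReal 0 1)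
      ((∫ x, deriv (F (u ^ H * x)) u ∂gaussianReal 0 1) +
        1 / 2 * ((∫ x, deriv (deriv (F · u)) (u ^ H * x) ∂gaussianReal 0 1) *
          (2 * H * u ^ (2 * H - 1)))) u := by
  have hFx := polyGrowthOn_deriv_left hF isCompact_Icc hFxx
  convert hasDerivAt_integral_comp_rpow_mul_chain hH (hF.of_le one_le_two) hF₀ hFx hFt hu using 2
  symm
  calc ∫ x, deriv (F · u) (u ^ H * x) * (H * u ^ (H - 1) * x) ∂gaussianReal 0 1
      = H * u ^ (H - 1) * ∫ x, x * deriv (F · u) (u ^ H * x) ∂gaussianReal 0 1 := by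
        rw [← integral_const_mul]
        congr 1 with x
        ring
    _ = H * u ^ (H - 1) * (u ^ H * ∫ x, deriv (deriv (F · u)) (u ^ H * x) ∂gaussianReal 0 1) := by
        rw [integral_mul_deriv_left_comp_mul hF hFx hFxx _ (Ioo_subset_Icc_self hu)]
    _ = _ := by
        rw [show 2 * H - 1 = (H - 1) + H by ring, rpow_add hu.1]
        ring

end GaussianMarginal

theorem gaussian_time_marginal_ito_formula_general
    (H T : ℝ) (hH : H ∈ Set.Ioc (0:ℝ) (1/2))
    (F : ℝ → ℝ → ℝ)
    (hF : ContDiff ℝ 2 (fun p : ℝ × ℝ => F p.1 p.2))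
    -- polynomial growth of F and of its derivatives used below
    (hgrowth : ∃ C : ℝ, ∃ n : ℕ, ∀ x t : ℝ, t ∈ Set.Icc 0 T →
      |F x t| ≤ C * (1 + |x|) ^ n ∧
      |deriv (fun u => F x u) t| ≤ C * (1 + |x|) ^ n ∧
      |deriv (fun y => deriv (fun z => F z t) y) x| ≤ C * (1 + |x|) ^ n) :
    ∀ s t : ℝ, 0 ≤ s → s ≤ t → t ≤ T →
      (∫ x, F (t ^ H * x) t ∂(gaussianReal 0 1))
        - (∫ x, F (s ^ H * x) s ∂(gaussianReal 0 1))
      = (∫ u in s..t, ∫ x, deriv (fun v => F (u ^ H * x) v) u ∂(gaussianReal 0 1))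
        + (1/2) * ∫ u in s..t,
            (∫ x, deriv (fun y => deriv (fun z => F z u) y) (u ^ H * x)
              ∂(gaussianReal 0 1)) * (2 * H * u ^ (2*H - 1)) := by
  intro s t hs hst htT
  obtain ⟨C, n, hg⟩ := hgrowth
  have hF₀ : PolyGrowthOn F (Icc 0 T) := ⟨C, n, fun x t ht => (hg x t ht).1⟩
  have hFt : PolyGrowthOn (fun x t => deriv (F x) t) (Icc 0 T) :=
    ⟨C, n, fun x t ht => (hg x t ht).2.1⟩
  have hFxx : PolyGrowthOn (fun x t => deriv (deriv (F · t)) x) (Icc 0 T) :=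
    ⟨C, n, fun x t ht => (hg x t ht).2.2⟩
  have hsub : Icc s t ⊆ Icc 0 T := Icc_subset_Icc hs htT
  have hcont := (continuousOn_integral_comp_rpow_mul (μ := 0) (v := 1) hF₀ hF.continuous
    hH.1.le).mono hsub
  have hA := (continuousOn_integral_comp_rpow_mul (μ := 0) (v := 1) hFt
    (continuous_deriv_right (hF.of_le one_le_two)) hH.1.le).mono hsub
  have hB := (continuousOn_integral_comp_rpow_mul (μ := 0) (v := 1) hFxx
    (continuous_deriv_deriv_left hF) hH.1.le).mono hsub
  rw [← uIcc_of_le hst] at hA hB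
  have hAint := hA.intervalIntegrable (μ := volume)
  have hBint := ((intervalIntegral.intervalIntegrable_rpow' (r := 2 * H - 1)
    (by linarith [hH.1])).const_mul (2 * H)).continuousOn_mul hB
  rw [← intervalIntegral.integral_const_mul, ← intervalIntegral.integral_add hAint
    (hBint.const_mul _)]
  exact (intervalIntegral.integral_eq_sub_of_hasDeriv_right_of_le hst hcont
    (fun u hu => (hasDerivAt_integral_comp_rpow_mul hH.1 hF hF₀ hFt hFxx
      ⟨hs.trans_lt hu.1, hu.2.trans_le htT⟩).hasDerivWithinAt)
    (hAint.add (hBint.const_mul _))).symm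

theorem gaussian_time_marginal_ito_formula
    (H T : ℝ) (hH : H ∈ Set.Ioc (0:ℝ) (1/2)) (hT : 0 < T)
    (F : ℝ → ℝ → ℝ)
    (hF : ContDiff ℝ 2 (fun p : ℝ × ℝ => F p.1 p.2))
    -- polynomial growth of F and of its derivatives used below
    (hgrowth : ∃ C : ℝ, ∃ n : ℕ, ∀ x t : ℝ, t ∈ Set.Icc 0 T →
      |F x t| ≤ C * (1 + |x|) ^ n ∧
      |deriv (fun u => F x u) t| ≤ C * (1 + |x|) ^ n ∧
      |deriv (fun y => deriv (fun z => F z t) y) x| ≤ C * (1 + |x|) ^ n) :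
    ∀ s t : ℝ, 0 ≤ s → s ≤ t → t ≤ T →
      (∫ x, F (t ^ H * x) t ∂(gaussianReal 0 1))
        - (∫ x, F (s ^ H * x) s ∂(gaussianReal 0 1))
      = (∫ u in s..t, ∫ x, deriv (fun v => F (u ^ H * x) v) u ∂(gaussianReal 0 1))
        + (1/2) * ∫ u in s..t,
            (∫ x, deriv (fun y => deriv (fun z => F z u) y) (u ^ H * x)
              ∂(gaussianReal 0 1)) * (2 * H * u ^ (2*H - 1)) :=
  gaussian_time_marginal_ito_formula_general H T hH F hF hgrowth
end
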